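/- Let p be an odd prime, F a field containing a primitive p-th root of unity ξ_p, and K = F(a^{1/p}) cyclic of degree p over F with σ(a^{1/p}) = ξ_p a^{1/p}. If ξ_p ∉ N_{K/F}(K^×), then the class [a^{1/p}] ∈ J = K^×/K^{×p} satisfies [a^{1/p}]^{(σ-1)^2} = [1] but [a^{1/p}]^{σ-1} ≠ [1]; that is, the cyclic F_p[G]-submodule generated by [a^{1/p}] has length exactly 2. -/

import Mathlib

noncomputable section

/-- The subgroup of `p`-th powers in `K^×`. -/
def pthPowers (p : ℕ) (K : Type) [Field K] : Subgroup Kˣ :=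
  (powMonoidHom p : Kˣ →* Kˣ).range

instance (p : ℕ) (K : Type) [Field K] : (pthPowers p K).Normal :=
  Subgroup.normal_of_comm _

/-- The `𝔽_p[Gal(K/F)]`-module `J = K^×/K^{×p}` (written multiplicatively). -/
abbrev Jmod (p : ℕ) (K : Type) [Field K] := Kˣ ⧸ pthPowers p K

/-- The class `[γ] ∈ J` of `γ ∈ K^×`. -/
def mkJ (p : ℕ) (K : Type) [Field K] : Kˣ →* Jmod p K := QuotientGroup.mk' _

/-- The action of an `F`-automorphism `σ` of `K` on `K^×`. -/
def sigU (p : ℕ) (K : Type) [Field K] (F : Type) [Field F] [Algebra F K]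
    (σ : K ≃ₐ[F] K) : Kˣ →* Kˣ :=
  Units.map (σ.toAlgHom.toRingHom.toMonoidHom)

/-- The action of `σ` on `J = K^×/K^{×p}`. -/
def sigJ (p : ℕ) (K : Type) [Field K] (F : Type) [Field F] [Algebra F K]
    (σ : K ≃ₐ[F] K) : Jmod p K →* Jmod p K :=
  QuotientGroup.map _ _ (sigU p K F σ) (by
    rintro x ⟨y, rfl⟩
    exact ⟨sigU p K F σ y, by simp [powMonoidHom, map_pow]⟩)

/-- The action of `σ - 1` on the multiplicative module `J`: `x ↦ σ(x)·x⁻¹`. -/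
def rhoJ (p : ℕ) (K : Type) [Field K] (F : Type) [Field F] [Algebra F K]
    (σ : K ≃ₐ[F] K) : Jmod p K →* Jmod p K :=
  MonoidHom.mk' (fun x => sigJ p K F σ x * x⁻¹) (by
    intro a b
    try simp only []
    rw [map_mul, mul_inv_rev, mul_comm (b⁻¹) (a⁻¹)]
    exact mul_mul_mul_comm (sigJ p K F σ a) (sigJ p K F σ b) a⁻¹ b⁻¹)

/-- The action of `(σ - 1)^n` on `J`. -/
def rhoPowJ (p : ℕ) (K : Type) [Field K] (F : Type) [Field F] [Algebra F K]
    (σ : K ≃ₐ[F] K) : ℕ → (Jmod p K →* Jmod p K)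
  | 0 => MonoidHom.id _
  | n + 1 => (rhoJ p K F σ).comp (rhoPowJ p K F σ n)

end

/-! Since `σ α = ξ α`, `(σ - 1)[α] = [ξ]`, and `ξ ∈ F` is fixed by `σ`, so `(σ - 1)²[α] = 1`.
If `[ξ]` were trivial, `ξ = β ^ p` for some `β ∈ K`. Then `σ β / β` is a `p`-th root of unity
`ξ ^ k`, so `β / α ^ k` is fixed by `σ`, which generates `Gal(K/F)`, and lies in `F`.
Writing `β = e α ^ k` with `e ∈ F` gives `N(β) = e ^ p N(α) ^ k = e ^ p a ^ k = β ^ p = ξ`,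
using `N(α) = a` for odd `p`. -/

open Polynomial Module

section Jmod

variable {p : ℕ} {K F : Type} [Field K] [Field F] [Algebra F K] (σ : K ≃ₐ[F] K)

@[simp] lemma coe_sigU (u : Kˣ) : (sigU p K F σ u : K) = σ u := rfl

lemma mkJ_eq_one_iff {u : Kˣ} : mkJ p K u = 1 ↔ ∃ β : Kˣ, β ^ p = u :=
  QuotientGroup.eq_one_iff u

lemma rhoJ_mkJ_of_sigU_eq_mul {u c : Kˣ} (h : sigU p K F σ u = c * u) :
    rhoJ p K F σ (mkJ p K u) = mkJ p K c := by
  change mkJ p K (sigU p K F σ u) * (mkJ p K u)⁻¹ = _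
  rw [h, map_mul, mul_inv_cancel_right]

lemma rhoPowJ_two (x : Jmod p K) : rhoPowJ p K F σ 2 x = rhoJ p K F σ (rhoJ p K F σ x) := rfl

end Jmod

section Kummer

variable {F K : Type} [Field F] [Field K] [Algebra F K] {n : ℕ} {a : F} {α : K}

lemma exists_eq_algebraMap_mul_pow_of_pow_eq_algebraMap [NeZero n] {σ : K ≃ₐ[F] K} {ξ : F}
    (hξ : IsPrimitiveRoot ξ n) (hσα : σ α = algebraMap F K ξ * α) (hα0 : α ≠ 0)
    (hfix : ∀ x : K, σ x = x → x ∈ Set.range (algebraMap F K))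
    {β : K} {c : F} (hβ : β ^ n = algebraMap F K c) :
    ∃ (e : F) (k : ℕ), β = algebraMap F K e * α ^ k := by
  by_cases hβ0 : β = 0
  · exact ⟨0, 0, by simp [hβ0]⟩
  have hξK := hξ.map_of_injective (algebraMap F K).injective
  have hroot : (σ β / β) ^ n = 1 := by
    rw [div_pow, ← map_pow, hβ, AlgEquiv.commutes, div_self (hβ ▸ pow_ne_zero n hβ0)]
  obtain ⟨k, -, hk⟩ := hξK.eq_pow_of_pow_eq_one hroot
  have hσβ : σ β = algebraMap F K ξ ^ k * β := by rw [hk, div_mul_cancel₀ _ hβ0]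
  obtain ⟨e, he⟩ := hfix (β / α ^ k) (by
    rw [map_div₀, map_pow, hσα, hσβ, mul_pow]
    exact mul_div_mul_left _ _ (pow_ne_zero k (hξK.ne_zero (NeZero.ne n))))
  exact ⟨e, k, by rw [he, div_mul_cancel₀ _ (pow_ne_zero k hα0)]⟩

variable [FiniteDimensional F K]

lemma minpoly_eq_X_pow_sub_C_of_adjoin_eq_top (hα : α ^ n = algebraMap F K a)
    (hadj : Algebra.adjoin F {α} = ⊤) (hn : finrank F K = n) :
    minpoly F α = X ^ n - C a := by
  subst hn
  have htop := IntermediateField.adjoin_eq_top_of_algebra F {α} hadj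
  refine (minpoly.eq_of_irreducible_of_monic (irreducible_X_pow_sub_C_of_root_adjoin_eq_top hα htop)
    ?_ (monic_X_pow_sub_C _ finrank_pos.ne')).symm
  simp [hα]

lemma norm_eq_of_pow_eq_of_adjoin_eq_top (hodd : Odd n) (hα : α ^ n = algebraMap F K a)
    (hadj : Algebra.adjoin F {α} = ⊤) (hn : finrank F K = n) :
    Algebra.norm F α = a := by
  have hmin := minpoly_eq_X_pow_sub_C_of_adjoin_eq_top hα hadj hn
  have := Algebra.PowerBasis.norm_gen_eq_coeff_zero_minpoly
    (PowerBasis.ofAdjoinEqTop (IsIntegral.of_finite F α) hadj)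
  simpa [hmin, hodd.pos.ne, hodd.neg_one_pow] using this

lemma isGalois_of_pow_eq_of_adjoin_eq_top {ξ : F} (hξ : IsPrimitiveRoot ξ n)
    (hα : α ^ n = algebraMap F K a) (hadj : Algebra.adjoin F {α} = ⊤) (hn : finrank F K = n) :
    IsGalois F K := by
  subst hn
  have htop := IntermediateField.adjoin_eq_top_of_algebra F {α} hadj
  have hroots : (primitiveRoots (finrank F K) F).Nonempty :=
    ⟨ξ, (mem_primitiveRoots finrank_pos).mpr hξ⟩
  have := isSplittingField_X_pow_sub_C_of_root_adjoin_eq_top hroots hα htop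
  exact isGalois_of_isSplittingField_X_pow_sub_C hroots
    (irreducible_X_pow_sub_C_of_root_adjoin_eq_top hα htop) K

lemma mem_range_algebraMap_of_fixed [IsGalois F K] {σ : K ≃ₐ[F] K}
    (hgen : ∀ τ : K ≃ₐ[F] K, τ ∈ Subgroup.zpowers σ) {x : K} (hx : σ x = x) :
    x ∈ Set.range (algebraMap F K) := by
  rw [IsGalois.mem_range_algebraMap_iff_fixed]
  intro τ
  obtain ⟨j, rfl⟩ := Subgroup.mem_zpowers_iff.mp (hgen τ)
  exact MulAction.mem_fixedBy_zpow (g := σ) hx j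

lemma norm_eq_of_pow_eq_algebraMap {σ : K ≃ₐ[F] K} {ξ : F} (hodd : Odd n)
    (hξ : IsPrimitiveRoot ξ n) (hα : α ^ n = algebraMap F K a) (hα0 : α ≠ 0)
    (hadj : Algebra.adjoin F {α} = ⊤) (hn : finrank F K = n)
    (hgen : ∀ τ : K ≃ₐ[F] K, τ ∈ Subgroup.zpowers σ) (hσα : σ α = algebraMap F K ξ * α)
    {β : K} {c : F} (hβ : β ^ n = algebraMap F K c) :
    Algebra.norm F β = c := by
  have := isGalois_of_pow_eq_of_adjoin_eq_top hξ hα hadj hn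
  have : NeZero n := ⟨hodd.pos.ne'⟩
  obtain ⟨e, k, rfl⟩ := exists_eq_algebraMap_mul_pow_of_pow_eq_algebraMap hξ hσα hα0
    (fun _ ↦ mem_range_algebraMap_of_fixed hgen) hβ
  apply (algebraMap F K).injective
  rw [← hβ, map_mul, map_pow, Algebra.norm_algebraMap, hn,
    norm_eq_of_pow_eq_of_adjoin_eq_top hodd hα hadj hn, mul_pow, ← pow_mul, mul_comm k, pow_mul,
    hα]
  simp

end Kummer

theorem stmt_13_general (p : ℕ) (hp2 : Odd p)
    (F K : Type) [Field F] [Field K] [Algebra F K]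
    (xi : F) (hxi : IsPrimitiveRoot xi p)
    (a : Fˣ) (alpha : Kˣ) (halpha : (alpha : K) ^ p = algebraMap F K a)
    (hadj : Algebra.adjoin F {(alpha : K)} = ⊤)
    (hdeg : Module.finrank F K = p)
    (sigma : K ≃ₐ[F] K) (hgen : ∀ eta : K ≃ₐ[F] K, eta ∈ Subgroup.zpowers sigma)
    (hsa : sigma (alpha : K) = algebraMap F K xi * (alpha : K))
    (hxinotnorm : ¬ ∃ u : Kˣ, Algebra.norm F (u : K) = xi) :
    rhoPowJ p K F sigma 2 (mkJ p K alpha) = 1 ∧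
      rhoJ p K F sigma (mkJ p K alpha) ≠ 1 := by
  have : FiniteDimensional F K := .of_finrank_pos (hdeg ▸ hp2.pos)
  let ξ : Kˣ :=
    Units.mk0 (algebraMap F K xi) ((_root_.map_ne_zero _).mpr (hxi.ne_zero hp2.pos.ne'))
  have hrho : rhoJ p K F sigma (mkJ p K alpha) = mkJ p K ξ :=
    rhoJ_mkJ_of_sigU_eq_mul sigma (Units.ext (by simp [ξ, hsa]))
  refine ⟨?_, ?_⟩
  · rw [rhoPowJ_two, hrho, rhoJ_mkJ_of_sigU_eq_mul sigma (c := 1) (Units.ext (by simp [ξ])),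
      map_one]
  · rw [hrho, Ne, mkJ_eq_one_iff]
    rintro ⟨β, hβ⟩
    exact hxinotnorm ⟨β, norm_eq_of_pow_eq_algebraMap hp2 hxi halpha alpha.ne_zero hadj hdeg hgen
      hsa (congrArg Units.val hβ)⟩

/-- Let `K = F(a^{1/p})` with `σ(a^{1/p}) = ξ·a^{1/p}`.  If `ξ ∉ N_{K/F}(K^×)`, then the
class of `a^{1/p}` in `J = K^×/K^{×p}` satisfies `[a^{1/p}]^{(σ-1)²} = [1]` but
`[a^{1/p}]^{σ-1} ≠ [1]`: the cyclic `𝔽_p[G]`-submodule it generates has length exactly 2. -/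
theorem stmt_13 (p : ℕ) [Fact p.Prime] (hp2 : Odd p)
    (F K : Type) [Field F] [Field K] [Algebra F K]
    (xi : F) (hxi : IsPrimitiveRoot xi p)
    (a : Fˣ) (alpha : Kˣ) (halpha : (alpha : K) ^ p = algebraMap F K a)
    (hadj : Algebra.adjoin F {(alpha : K)} = ⊤)
    (hdeg : Module.finrank F K = p)
    (sigma : K ≃ₐ[F] K) (hgen : ∀ eta : K ≃ₐ[F] K, eta ∈ Subgroup.zpowers sigma)
    (hsa : sigma (alpha : K) = algebraMap F K xi * (alpha : K))
    (hxinotnorm : ¬ ∃ u : Kˣ, Algebra.norm F (u : K) = xi) :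
    rhoPowJ p K F sigma 2 (mkJ p K alpha) = 1 ∧
      rhoJ p K F sigma (mkJ p K alpha) ≠ 1 :=
  stmt_13_general p hp2 F K xi hxi a alpha halpha hadj hdeg sigma hgen hsa hxinotnorm
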